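/- arXiv:1511.00773 — 5 statements merged into one kernel-verified Lean document; each statement's English description precedes it below -/
import Mathlib

section
/- Let G be a graph whose vertex set V is a finite subset of the positive integers. Then the chromatic quasisymmetric function satisfies X_G(x,t) = Σ_σ t^{asc σ} M_{(|σ_1|,…,|σ_ℓ|)}, where the sum is over all ordered partitions σ = (σ_1,…,σ_ℓ) of V into nonempty parts such that every σ_i is a stable set of G (no edge of G joins two vertices of σ_i), and asc σ is the number of edges {u,v} of G with u < v such that v lies in a strictly later part of σ than u. -/
open scoped Classical
open Finset

noncomputable section

/-- The monomial quasisymmetric function `M_α` (in variables `x_1, x_2, …` indexed by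
positive natural numbers), as a multivariate power series with coefficients in `ℤ[t]`. -/
def MQ (α : List ℕ) : MvPowerSeries ℕ (Polynomial ℤ) :=
  fun d => if ∃ f : Fin α.length → ℕ, StrictMono f ∧ (∀ j, 0 < f j) ∧
      d = ∑ j, Finsupp.single (f j) (α.get j) then 1 else 0

/-- `β` is a composition of `n`: a list of positive integers summing to `n`. -/
def IsComp (n : ℕ) (β : List ℕ) : Prop := (∀ b ∈ β, 0 < b) ∧ β.sum = n

/-- The bar set of a composition: its proper partial sums `β_1, β_1+β_2, …`. -/
def barSet (β : List ℕ) : Set ℕ := {s | ∃ i, 0 < i ∧ i < β.length ∧ s = (β.take i).sum}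

/-- A sequencing of a finite vertex set `V`: a list enumerating `V` without repetition. -/
def IsSeq (V : Finset ℕ) (q : List ℕ) : Prop := q.Nodup ∧ q.toFinset = V

/-- `(q, β)` is an ordered path cover of the digraph `D` on vertex set `V`:
`q` is a sequencing of `V`, `β` is a composition of `|V|`, and every pair of
consecutive entries of `q` lying in the same block of `β` is a directed edge of `D`. -/
def IsOPC (V : Finset ℕ) (D : ℕ → ℕ → Prop) (q : List ℕ) (β : List ℕ) : Prop :=
  IsSeq V q ∧ IsComp q.length β ∧
    ∀ k, k + 1 < q.length → (k + 1) ∉ barSet β → D (q.getD k 0) (q.getD (k + 1) 0)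

/-- `asc q`: the number of pairs `{u,v}` with `u < v`, `v` appearing later in `q` than `u`,
such that either both `u→v` and `v→u` are edges of `D` or neither is. -/
def ascStat (D : ℕ → ℕ → Prop) (q : List ℕ) : ℕ :=
  ((q.toFinset ×ˢ q.toFinset).filter fun p =>
    p.1 < p.2 ∧ q.idxOf p.1 < q.idxOf p.2 ∧ (D p.1 p.2 ↔ D p.2 p.1)).card

/-- `des q`: the number of pairs `{u,v}` with `v < u`, `v` appearing later in `q` than `u`,
such that either both `u→v` and `v→u` are edges of `D` or neither is. -/
def desStat (D : ℕ → ℕ → Prop) (q : List ℕ) : ℕ :=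
  ((q.toFinset ×ˢ q.toFinset).filter fun p =>
    p.2 < p.1 ∧ q.idxOf p.1 < q.idxOf p.2 ∧ (D p.1 p.2 ↔ D p.2 p.1)).card

/-- The path quasisymmetric function `Ξ_D(x,t) = Σ_{(q,β)} t^{asc q} M_β`. -/
def Xi (V : Finset ℕ) (D : ℕ → ℕ → Prop) : MvPowerSeries ℕ (Polynomial ℤ) :=
  ∑ᶠ (q : List ℕ) (β : List ℕ),
    if IsOPC V D q β then
      (MvPowerSeries.C (σ := ℕ) (R := Polynomial ℤ)) (Polynomial.X ^ ascStat D q) * MQ β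
    else 0

/-- `asc κ` for a coloring: the number of edges `{u,v}` with `u < v` and `κ u < κ v`. -/
def ascColor (V : Finset ℕ) (A : ℕ → ℕ → Prop) (κ : ℕ → ℕ) : ℕ :=
  ((V ×ˢ V).filter fun p => A p.1 p.2 ∧ p.1 < p.2 ∧ κ p.1 < κ p.2).card

/-- A proper coloring of the graph with adjacency `A` on vertex set `V`, with colors the
positive integers (normalized to be `0` off `V`). -/
def IsProperColoring (V : Finset ℕ) (A : ℕ → ℕ → Prop) (κ : ℕ → ℕ) : Prop :=
  (∀ v, v ∉ V → κ v = 0) ∧ (∀ v ∈ V, 0 < κ v) ∧ ∀ u v, A u v → κ u ≠ κ v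

/-- The chromatic quasisymmetric function `X_G(x,t) = Σ_κ t^{asc κ} x_κ`, defined
coefficientwise: the coefficient of a monomial `d` is the sum of `t^{asc κ}` over all
proper colorings `κ` whose associated monomial is `d`. -/
def XG (V : Finset ℕ) (A : ℕ → ℕ → Prop) : MvPowerSeries ℕ (Polynomial ℤ) :=
  fun d => ∑ᶠ κ : ℕ → ℕ,
    if IsProperColoring V A κ ∧ (∑ v ∈ V, Finsupp.single (κ v) 1) = d
    then Polynomial.X ^ ascColor V A κ else 0

/-- The complement of a digraph `D` on vertex set `V`. -/
def Dcomp (V : Finset ℕ) (D : ℕ → ℕ → Prop) : ℕ → ℕ → Prop :=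
  fun u v => u ∈ V ∧ v ∈ V ∧ u ≠ v ∧ ¬ D u v

/-!
Coloring the `j`-th block of an ordered partition `σ` of `V` into stable sets with the `j`-th
of some colors `c_1 < ⋯ < c_ℓ` gives a proper coloring, and every proper coloring arises this
way from its color classes listed by increasing color. Fixing the monomial `x^d` fixes the colors
as the sorted support of `d`, so the proper colorings with monomial `x^d` are in bijection with
the stable ordered partitions whose block sizes are the exponents of `x^d` in order, i.e. those
`σ` for which `x^d` occurs in `M_{(|σ_1|, …, |σ_ℓ|)}`. Since the colors increase along the
blocks, an edge `u < v` is an ascent of the coloring exactly when `v` lies in a later block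
than `u`.
-/

section OrderedPartition

variable {α : Type*} {σ : List (Finset α)} {V : Finset α}

theorem pairwiseDisjoint_get (hσ : σ.Pairwise Disjoint) :
    ((univ : Finset (Fin σ.length)) : Set (Fin σ.length)).PairwiseDisjoint σ.get := by
  intro i _ j _ hij
  rcases lt_or_gt_of_ne hij with h | h
  · exact List.pairwise_iff_get.1 hσ i j h
  · exact (List.pairwise_iff_get.1 hσ j i h).symm

theorem eq_of_mem_get_of_mem_get (hσ : σ.Pairwise Disjoint) {i j : Fin σ.length} {v : α}
    (hi : v ∈ σ.get i) (hj : v ∈ σ.get j) : i = j := by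
  by_contra hij
  exact Finset.disjoint_left.1 (pairwiseDisjoint_get hσ (mem_coe.2 (mem_univ i))
    (mem_coe.2 (mem_univ j)) hij) hi hj

variable [DecidableEq α]

theorem mem_foldr_union_iff {v : α} : v ∈ σ.foldr (· ∪ ·) ∅ ↔ ∃ S ∈ σ, v ∈ S := by
  induction σ with
  | nil => simp
  | cons S σ ih => simp [ih]

theorem mem_iff_exists_mem_get (hV : σ.foldr (· ∪ ·) ∅ = V) {v : α} :
    v ∈ V ↔ ∃ j : Fin σ.length, v ∈ σ.get j := by
  rw [← hV, mem_foldr_union_iff]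
  constructor
  · rintro ⟨S, hS, hv⟩
    obtain ⟨j, rfl⟩ := List.mem_iff_get.1 hS
    exact ⟨j, hv⟩
  · rintro ⟨j, hv⟩
    exact ⟨_, List.get_mem σ j, hv⟩

theorem eq_biUnion_get (hV : σ.foldr (· ∪ ·) ∅ = V) :
    V = univ.biUnion fun j : Fin σ.length => σ.get j := by
  ext v
  simp [mem_iff_exists_mem_get hV]

theorem length_le_card (hne : ∀ S ∈ σ, S.Nonempty) (hσ : σ.Pairwise Disjoint)
    (hV : σ.foldr (· ∪ ·) ∅ = V) : σ.length ≤ #V := by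
  rw [eq_biUnion_get hV, card_biUnion (pairwiseDisjoint_get hσ)]
  calc σ.length = ∑ _j : Fin σ.length, 1 := by simp
    _ ≤ _ := sum_le_sum fun j _ => (hne _ (List.get_mem σ j)).card_pos

theorem finite_setOf_orderedPartition (V : Finset α) :
    {σ : List (Finset α) | (∀ S ∈ σ, S.Nonempty) ∧ σ.Pairwise Disjoint ∧
      σ.foldr (· ∪ ·) ∅ = V}.Finite := by
  refine ((List.finite_length_le V.powerset #V).image (List.map Subtype.val)).subset ?_
  rintro σ ⟨hne, hσ, hV⟩
  have hsub : ∀ S ∈ σ, S ∈ V.powerset := fun S hS => mem_powerset.2 fun v hv =>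
    hV ▸ mem_foldr_union_iff.2 ⟨S, hS, hv⟩
  refine ⟨σ.attach.map fun S => ⟨S.1, hsub S.1 S.2⟩, ?_, ?_⟩
  · simpa using length_le_card hne hσ hV
  · simp

end OrderedPartition

theorem sort_support_sum_single {n : ℕ} {f : Fin n → ℕ} {a : Fin n → ℕ} (hf : StrictMono f)
    (ha : ∀ j, a j ≠ 0) : (∑ j, Finsupp.single (f j) (a j)).support.sort = List.ofFn f := by
  have hsupp : (∑ j, Finsupp.single (f j) (a j)).support = (List.ofFn f).toFinset := by
    rw [Finsupp.support_sum_eq_biUnion _ fun i j hij => by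
      simpa [Finsupp.support_single _ (ha _)] using hf.injective.ne hij]
    ext c
    simp [Finsupp.support_single _ (ha _), List.mem_ofFn, eq_comm]
  rw [hsupp, List.toFinset_sort _ (List.nodup_ofFn.2 hf.injective)]
  exact List.pairwise_ofFn.2 fun i j hij => (hf hij).le

def IsStableOrderedPartition (V : Finset ℕ) (A : ℕ → ℕ → Prop) (σ : List (Finset ℕ)) : Prop :=
  (∀ S ∈ σ, S.Nonempty) ∧ σ.Pairwise Disjoint ∧ σ.foldr (· ∪ ·) ∅ = V ∧
    ∀ S ∈ σ, ∀ u ∈ S, ∀ v ∈ S, ¬ A u v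

def partAsc (V : Finset ℕ) (A : ℕ → ℕ → Prop) (σ : List (Finset ℕ)) : ℕ :=
  #{p ∈ V ×ˢ V | A p.1 p.2 ∧ p.1 < p.2 ∧
    ∃ i j : Fin σ.length, i < j ∧ p.1 ∈ σ.get i ∧ p.2 ∈ σ.get j}

/-- `x^d` is a monomial of `M_{(|σ_1|, …, |σ_ℓ|)}`. -/
def IsBlockMonomial (d : ℕ →₀ ℕ) (σ : List (Finset ℕ)) : Prop :=
  ∃ f : Fin σ.length → ℕ, StrictMono f ∧ (∀ j, 0 < f j) ∧
    d = ∑ j, Finsupp.single (f j) #(σ.get j)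

section BlockColoring

variable {V : Finset ℕ} {A : ℕ → ℕ → Prop} {σ : List (Finset ℕ)} {κ : ℕ → ℕ}
  {f : Fin σ.length → ℕ}

theorem sum_single_eq_sum_single_card (hσ : σ.Pairwise Disjoint) (hV : σ.foldr (· ∪ ·) ∅ = V)
    (hκ : ∀ j, ∀ v ∈ σ.get j, κ v = f j) :
    ∑ v ∈ V, Finsupp.single (κ v) 1 = ∑ j, Finsupp.single (f j) #(σ.get j) := by
  rw [eq_biUnion_get hV, sum_biUnion (pairwiseDisjoint_get hσ)]
  refine sum_congr rfl fun j _ => ?_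
  rw [sum_congr rfl fun v hv => by rw [hκ j v hv], sum_const, Finsupp.smul_single, smul_eq_mul,
    mul_one]

theorem isProperColoring_of_forall_mem_get (hsupp : ∀ u v, A u v → u ∈ V ∧ v ∈ V)
    (hV : σ.foldr (· ∪ ·) ∅ = V) (hstab : ∀ S ∈ σ, ∀ u ∈ S, ∀ v ∈ S, ¬ A u v)
    (hf : Function.Injective f) (hpos : ∀ j, 0 < f j) (hκ : ∀ j, ∀ v ∈ σ.get j, κ v = f j)
    (hzero : ∀ v ∉ V, κ v = 0) : IsProperColoring V A κ := by
  refine ⟨hzero, fun v hv => ?_, fun u v huv hκuv => ?_⟩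
  · obtain ⟨j, hj⟩ := (mem_iff_exists_mem_get hV).1 hv
    exact hκ j v hj ▸ hpos j
  · obtain ⟨i, hi⟩ := (mem_iff_exists_mem_get hV).1 (hsupp u v huv).1
    obtain ⟨j, hj⟩ := (mem_iff_exists_mem_get hV).1 (hsupp u v huv).2
    obtain rfl : i = j := hf (by rw [← hκ i u hi, ← hκ j v hj, hκuv])
    exact hstab _ (List.get_mem σ i) u hi v hj huv

theorem ascColor_eq_partAsc (hσ : σ.Pairwise Disjoint) (hV : σ.foldr (· ∪ ·) ∅ = V)
    (hf : StrictMono f) (hκ : ∀ j, ∀ v ∈ σ.get j, κ v = f j) :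
    ascColor V A κ = partAsc V A σ := by
  refine congrArg card (filter_congr fun p hp => ?_)
  rw [mem_product] at hp
  obtain ⟨i, hi⟩ := (mem_iff_exists_mem_get hV).1 hp.1
  obtain ⟨j, hj⟩ := (mem_iff_exists_mem_get hV).1 hp.2
  rw [hκ i _ hi, hκ j _ hj, hf.lt_iff_lt]
  refine and_congr_right fun _ => and_congr_right fun _ => ⟨fun h => ⟨i, j, h, hi, hj⟩, ?_⟩
  rintro ⟨i', j', h, hi', hj'⟩
  rwa [eq_of_mem_get_of_mem_get hσ hi hi', eq_of_mem_get_of_mem_get hσ hj hj']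

end BlockColoring

/-- Colors block `j` of `σ` by the `j`-th smallest variable of `x^d`, and everything else by `0`. -/
def partColoring (d : ℕ →₀ ℕ) (σ : List (Finset ℕ)) (v : ℕ) : ℕ :=
  d.support.sort.getD (σ.findIdx (v ∈ ·)) 0

def colorClasses (d : ℕ →₀ ℕ) (V : Finset ℕ) (κ : ℕ → ℕ) : List (Finset ℕ) :=
  d.support.sort.map fun c => {v ∈ V | κ v = c}

section PartColoring

variable {d : ℕ →₀ ℕ} {V : Finset ℕ} {σ : List (Finset ℕ)} {f : Fin σ.length → ℕ}

theorem partColoring_of_mem_get (hσ : σ.Pairwise Disjoint) (hd : d.support.sort = List.ofFn f)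
    {j : Fin σ.length} {v : ℕ} (hv : v ∈ σ.get j) : partColoring d σ v = f j := by
  have hidx : σ.findIdx (v ∈ ·) = j := by
    refine (List.findIdx_eq j.isLt).2 ⟨by simpa using hv, fun i hij => ?_⟩
    refine decide_eq_false fun hvi => hij.ne ?_
    exact congrArg Fin.val (eq_of_mem_get_of_mem_get hσ (i := ⟨i, hij.trans j.isLt⟩) hvi hv)
  rw [partColoring, hidx, hd, List.getD_eq_getElem _ _ (by simp), List.getElem_ofFn]

theorem partColoring_of_notMem (hV : σ.foldr (· ∪ ·) ∅ = V) (hd : d.support.sort = List.ofFn f)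
    {v : ℕ} (hv : v ∉ V) : partColoring d σ v = 0 := by
  have hidx : σ.findIdx (v ∈ ·) = σ.length := List.findIdx_eq_length.2 fun S hS =>
    decide_eq_false fun hvS => hv (hV ▸ mem_foldr_union_iff.2 ⟨S, hS, hvS⟩)
  rw [partColoring, hidx, List.getD_eq_default _ _ (by simp [hd])]

theorem colorClasses_partColoring_of_sort_eq (hσ : σ.Pairwise Disjoint)
    (hV : σ.foldr (· ∪ ·) ∅ = V) (hf : Function.Injective f) (hd : d.support.sort = List.ofFn f) :
    colorClasses d V (partColoring d σ) = σ := by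
  rw [colorClasses, hd, List.map_ofFn]
  conv_rhs => rw [← List.ofFn_get σ]
  congr 1
  funext j
  ext v
  simp only [Function.comp_apply, mem_filter]
  constructor
  · rintro ⟨hv, hvj⟩
    obtain ⟨i, hi⟩ := (mem_iff_exists_mem_get hV).1 hv
    rw [partColoring_of_mem_get hσ hd hi, hf.eq_iff] at hvj
    exact hvj ▸ hi
  · intro hv
    exact ⟨(mem_iff_exists_mem_get hV).2 ⟨j, hv⟩, partColoring_of_mem_get hσ hd hv⟩

end PartColoring

section ColorClasses

variable {d : ℕ →₀ ℕ} {V : Finset ℕ} {A : ℕ → ℕ → Prop} {κ : ℕ → ℕ}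

theorem mem_support_iff_exists_eq (hd : ∑ v ∈ V, Finsupp.single (κ v) 1 = d) {c : ℕ} :
    c ∈ d.support ↔ ∃ v ∈ V, κ v = c := by
  subst hd
  simp [Finsupp.mem_support_iff, Finset.sum_apply', Finsupp.single_apply]

theorem mem_get_colorClasses {j : Fin (colorClasses d V κ).length} {v : ℕ} :
    v ∈ (colorClasses d V κ).get j ↔ v ∈ V ∧ κ v = d.support.sort.getD j 0 := by
  have hj : (j : ℕ) < d.support.sort.length := by simpa [colorClasses] using j.2
  rw [List.get_eq_getElem]
  simp only [colorClasses, List.getElem_map, mem_filter, List.getD_eq_getElem _ _ hj]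

theorem pairwise_disjoint_colorClasses : (colorClasses d V κ).Pairwise Disjoint := by
  refine List.pairwise_map.2 ((sort_nodup _ _).imp fun hne => ?_)
  exact disjoint_filter.2 fun v _ hv hv' => hne (hv.symm.trans hv')

theorem foldr_union_colorClasses (hd : ∑ v ∈ V, Finsupp.single (κ v) 1 = d) :
    (colorClasses d V κ).foldr (· ∪ ·) ∅ = V := by
  ext v
  simp only [mem_foldr_union_iff, colorClasses, List.mem_map, mem_sort]
  constructor
  · rintro ⟨_, ⟨c, _, rfl⟩, hv⟩
    exact (mem_filter.1 hv).1
  · intro hv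
    exact ⟨_, ⟨κ v, (mem_support_iff_exists_eq hd).2 ⟨v, hv, rfl⟩, rfl⟩, mem_filter.2 ⟨hv, rfl⟩⟩

theorem isStableOrderedPartition_colorClasses (hκ : ∀ u v, A u v → κ u ≠ κ v)
    (hd : ∑ v ∈ V, Finsupp.single (κ v) 1 = d) :
    IsStableOrderedPartition V A (colorClasses d V κ) := by
  refine ⟨?_, pairwise_disjoint_colorClasses, foldr_union_colorClasses hd, ?_⟩
  · simp only [colorClasses, List.mem_map, mem_sort]
    rintro _ ⟨c, hc, rfl⟩
    obtain ⟨v, hv, rfl⟩ := (mem_support_iff_exists_eq hd).1 hc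
    exact ⟨v, mem_filter.2 ⟨hv, rfl⟩⟩
  · simp only [colorClasses, List.mem_map]
    rintro _ ⟨c, _, rfl⟩ u hu v hv huv
    exact hκ u v huv ((mem_filter.1 hu).2.trans (mem_filter.1 hv).2.symm)

theorem isBlockMonomial_colorClasses (hpos : ∀ v ∈ V, 0 < κ v)
    (hd : ∑ v ∈ V, Finsupp.single (κ v) 1 = d) : IsBlockMonomial d (colorClasses d V κ) := by
  have hlen (j : Fin (colorClasses d V κ).length) : (j : ℕ) < d.support.sort.length := by
    simpa [colorClasses] using j.2
  refine ⟨fun j => d.support.sort.getD j 0, fun i j hij => ?_, fun j => ?_, ?_⟩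
  · simp only [List.getD_eq_getElem _ _ (hlen _)]
    exact (sortedLT_sort _).getElem_lt_getElem_iff.2 hij
  · have hmem : d.support.sort.getD j 0 ∈ d.support := by
      rw [List.getD_eq_getElem _ _ (hlen j)]
      exact (mem_sort _).1 (List.getElem_mem _)
    obtain ⟨v, hv, hvj⟩ := (mem_support_iff_exists_eq hd).1 hmem
    exact (hpos v hv).trans_eq hvj
  · exact hd.symm.trans (sum_single_eq_sum_single_card pairwise_disjoint_colorClasses
      (foldr_union_colorClasses hd) fun j v hv => (mem_get_colorClasses.1 hv).2)

theorem partColoring_colorClasses (hzero : ∀ v ∉ V, κ v = 0)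
    (hd : ∑ v ∈ V, Finsupp.single (κ v) 1 = d) : partColoring d (colorClasses d V κ) = κ := by
  funext v
  rw [partColoring, colorClasses, List.findIdx_map]
  by_cases hv : v ∈ V
  · simp only [Function.comp_def, mem_filter, hv, true_and]
    have hex : ∃ c ∈ d.support.sort, decide (κ v = c) :=
      ⟨κ v, (mem_sort _).2 ((mem_support_iff_exists_eq hd).2 ⟨v, hv, rfl⟩), by simp⟩
    have hlt := List.findIdx_lt_length_of_exists hex
    rw [List.getD_eq_getElem _ _ hlt]
    exact (of_decide_eq_true (List.findIdx_getElem (w := hlt))).symm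
  · rw [List.getD_eq_default _ _ (List.findIdx_eq_length.2 fun _ _ => by simp [hv]).ge,
      hzero v hv]

end ColorClasses

section Bijection

variable {V : Finset ℕ} {A : ℕ → ℕ → Prop} {σ : List (Finset ℕ)} {d : ℕ →₀ ℕ}

theorem IsBlockMonomial.exists_sort_support_eq (hd : IsBlockMonomial d σ)
    (hne : ∀ S ∈ σ, S.Nonempty) :
    ∃ f : Fin σ.length → ℕ, StrictMono f ∧ (∀ j, 0 < f j) ∧
      d = ∑ j, Finsupp.single (f j) #(σ.get j) ∧ d.support.sort = List.ofFn f := by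
  obtain ⟨f, hf, hpos, rfl⟩ := hd
  exact ⟨f, hf, hpos, rfl,
    sort_support_sum_single hf fun j => (hne _ (List.get_mem σ j)).card_pos.ne'⟩

theorem IsStableOrderedPartition.isProperColoring_partColoring
    (hσ : IsStableOrderedPartition V A σ) (hsupp : ∀ u v, A u v → u ∈ V ∧ v ∈ V)
    (hd : IsBlockMonomial d σ) :
    IsProperColoring V A (partColoring d σ) ∧
      ∑ v ∈ V, Finsupp.single (partColoring d σ v) 1 = d := by
  obtain ⟨hne, hdisj, hV, hstab⟩ := hσ
  obtain ⟨f, hf, hpos, hdf, hsort⟩ := hd.exists_sort_support_eq hne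
  have hκ : ∀ j, ∀ v ∈ σ.get j, partColoring d σ v = f j := fun _ _ hv =>
    partColoring_of_mem_get hdisj hsort hv
  exact ⟨isProperColoring_of_forall_mem_get hsupp hV hstab hf.injective hpos hκ
      fun v hv => partColoring_of_notMem hV hsort hv,
    (sum_single_eq_sum_single_card hdisj hV hκ).trans hdf.symm⟩

theorem IsStableOrderedPartition.ascColor_partColoring (hσ : IsStableOrderedPartition V A σ)
    (hd : IsBlockMonomial d σ) :
    ascColor V A (partColoring d σ) = partAsc V A σ := by
  obtain ⟨hne, hdisj, hV, -⟩ := hσ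
  obtain ⟨f, hf, -, -, hsort⟩ := hd.exists_sort_support_eq hne
  exact ascColor_eq_partAsc hdisj hV hf fun j v hv => partColoring_of_mem_get hdisj hsort hv

theorem IsStableOrderedPartition.colorClasses_partColoring (hσ : IsStableOrderedPartition V A σ)
    (hd : IsBlockMonomial d σ) :
    colorClasses d V (partColoring d σ) = σ := by
  obtain ⟨hne, hdisj, hV, -⟩ := hσ
  obtain ⟨f, hf, -, -, hsort⟩ := hd.exists_sort_support_eq hne
  exact colorClasses_partColoring_of_sort_eq hdisj hV hf.injective hsort

theorem bijOn_partColoring (hsupp : ∀ u v, A u v → u ∈ V ∧ v ∈ V) (d : ℕ →₀ ℕ) :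
    Set.BijOn (partColoring d) {σ | IsStableOrderedPartition V A σ ∧ IsBlockMonomial d σ}
      {κ | IsProperColoring V A κ ∧ ∑ v ∈ V, Finsupp.single (κ v) 1 = d} :=
  Set.InvOn.bijOn
    ⟨fun _ hσ => hσ.1.colorClasses_partColoring hσ.2,
      fun _ hκ => partColoring_colorClasses hκ.1.1 hκ.2⟩
    (fun _ hσ => hσ.1.isProperColoring_partColoring hsupp hσ.2)
    fun _ hκ => ⟨isStableOrderedPartition_colorClasses hκ.1.2.2 hκ.2,
      isBlockMonomial_colorClasses hκ.1.2.1 hκ.2⟩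

end Bijection

theorem MQ_map_card_apply (σ : List (Finset ℕ)) (d : ℕ →₀ ℕ) :
    MQ (σ.map card) d = if IsBlockMonomial d σ then 1 else 0 := by
  refine if_congr ?_ rfl rfl
  have hlen : (σ.map card).length = σ.length := List.length_map _
  constructor
  · rintro ⟨f, hf, hpos, rfl⟩
    refine ⟨f ∘ Fin.cast hlen.symm, fun i j hij => hf hij, fun j => hpos _, ?_⟩
    exact Fintype.sum_equiv (finCongr hlen) _ _ fun j => by simp
  · rintro ⟨f, hf, hpos, rfl⟩
    refine ⟨f ∘ Fin.cast hlen, fun i j hij => hf hij, fun j => hpos _, ?_⟩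
    exact (Fintype.sum_equiv (finCongr hlen) _ _ fun j => by simp).symm

theorem coeff_ite_C_mul_MQ {p : Prop} [Decidable p] (n : ℕ) (σ : List (Finset ℕ))
    (d : ℕ →₀ ℕ) :
    MvPowerSeries.coeff d
        (if p then MvPowerSeries.C (Polynomial.X ^ n : Polynomial ℤ) * MQ (σ.map card) else 0) =
      if p ∧ IsBlockMonomial d σ then Polynomial.X ^ n else 0 := by
  by_cases hp : p
  · rw [if_pos hp, MvPowerSeries.coeff_C_mul, MvPowerSeries.coeff_apply, MQ_map_card_apply]
    simp only [hp, true_and, mul_ite, mul_one, mul_zero]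
  · rw [if_neg hp, if_neg fun h => hp h.1, map_zero]

theorem finsum_mem_setOf_eq_finsum_ite {α M : Type*} [AddCommMonoid M] (p : α → Prop)
    [DecidablePred p] (g : α → M) :
    ∑ᶠ a ∈ {a | p a}, g a = ∑ᶠ a, if p a then g a else 0 :=
  finsum_congr fun _ => finsum_eq_if

theorem chromatic_qsym_eq_sum_stable_ordered_partitions_general
    (V : Finset ℕ) (A : ℕ → ℕ → Prop)
    (hsupp : ∀ u v, A u v → u ∈ V ∧ v ∈ V) :
    XG V A = ∑ᶠ σ : List (Finset ℕ),
      if (∀ S ∈ σ, S.Nonempty) ∧ σ.Pairwise Disjoint ∧ σ.foldr (· ∪ ·) ∅ = V ∧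
          (∀ S ∈ σ, ∀ u ∈ S, ∀ v ∈ S, ¬ A u v) then
        (MvPowerSeries.C (σ := ℕ) (R := Polynomial ℤ))
            (Polynomial.X ^ ((V ×ˢ V).filter fun p => A p.1 p.2 ∧ p.1 < p.2 ∧
              ∃ i j : Fin σ.length, i < j ∧ p.1 ∈ σ.get i ∧ p.2 ∈ σ.get j).card) *
          MQ (σ.map Finset.card)
      else 0 := by
  have hfin : {σ | IsStableOrderedPartition V A σ}.Finite :=
    (finite_setOf_orderedPartition V).subset fun _ hσ => ⟨hσ.1, hσ.2.1, hσ.2.2.1⟩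
  refine MvPowerSeries.ext fun d => ?_
  rw [map_finsum _ ?hfinSupport]
  case hfinSupport => exact hfin.subset (Function.support_subset_iff'.2 fun _ hσ => if_neg hσ)
  simp only [coeff_ite_C_mul_MQ]
  rw [MvPowerSeries.coeff_apply, XG, ← finsum_mem_setOf_eq_finsum_ite,
    ← finsum_mem_setOf_eq_finsum_ite]
  exact (finsum_mem_eq_of_bijOn _ (bijOn_partColoring hsupp d) fun σ hσ =>
    congrArg (Polynomial.X ^ ·) (hσ.1.ascColor_partColoring hσ.2).symm).symm

/-- Shareshian–Wachs expansion of the chromatic quasisymmetric function: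
for a graph `G` on a finite vertex set `V` of positive integers,
`X_G(x,t) = Σ_σ t^{asc σ} M_{(|σ_1|,…,|σ_ℓ|)}`, summed over all ordered partitions `σ`
of `V` into nonempty stable sets, where `asc σ` counts edges `{u,v}` of `G` with `u < v`
and `v` lying in a strictly later part of `σ` than `u`. -/
theorem chromatic_qsym_eq_sum_stable_ordered_partitions
    (V : Finset ℕ) (hV : ∀ v ∈ V, 0 < v) (A : ℕ → ℕ → Prop)
    (hsymm : ∀ u v, A u v → A v u) (hirr : ∀ u, ¬ A u u)
    (hsupp : ∀ u v, A u v → u ∈ V ∧ v ∈ V) :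
    XG V A = ∑ᶠ σ : List (Finset ℕ),
      if (∀ S ∈ σ, S.Nonempty) ∧ σ.Pairwise Disjoint ∧ σ.foldr (· ∪ ·) ∅ = V ∧
          (∀ S ∈ σ, ∀ u ∈ S, ∀ v ∈ S, ¬ A u v) then
        (MvPowerSeries.C (σ := ℕ) (R := Polynomial ℤ))
            (Polynomial.X ^ ((V ×ˢ V).filter fun p => A p.1 p.2 ∧ p.1 < p.2 ∧
              ∃ i j : Fin σ.length, i < j ∧ p.1 ∈ σ.get i ∧ p.2 ∈ σ.get j).card) *
          MQ (σ.map Finset.card)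
      else 0 :=
  chromatic_qsym_eq_sum_stable_ordered_partitions_general V A hsupp
end
end

section
/- Let m be a Hessenberg function of length n (with m_n = n), let λ be a partition of n, and let T be an admissible tableau of shape λ for m. Then the Tymoczko statistic dim(T) equals the number of ordered pairs (i,k) of entries of T such that (i lies in the same row as k and strictly to the left of k, or i lies in a strictly lower row than k) and k < i ≤ m_k. -/
open scoped Classical
open Finset

noncomputable section

/-- `m` is a Hessenberg function of length `n` (with the convention `m n = n`):
`m_1 ≤ ⋯ ≤ m_{n-1} ≤ n` and `i ≤ m_i` for all `i`. -/
def IsHess (n : ℕ) (m : ℕ → ℕ) : Prop :=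
  (∀ i, 1 ≤ i → i ≤ n - 1 → i ≤ m i ∧ m i ≤ n) ∧
  (∀ i j, 1 ≤ i → i ≤ j → j ≤ n - 1 → m i ≤ m j) ∧ m n = n

/-- The digraph `D(m)` on `[n] = {1,…,n}`: edge `u → v` iff `v ≺ u` in the natural unit
interval order `P(m)`, i.e. iff `u > m v`. -/
def Dm (n : ℕ) (m : ℕ → ℕ) : ℕ → ℕ → Prop :=
  fun u v => u ∈ Finset.Icc 1 n ∧ v ∈ Finset.Icc 1 n ∧ m v < u

/-- The incomparability graph `G(m)` on `[n]`: for `u < v`, `u` and `v` are adjacent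
iff `v ≤ m u`. -/
def Gm (n : ℕ) (m : ℕ → ℕ) : ℕ → ℕ → Prop :=
  fun u v => u ∈ Finset.Icc 1 n ∧ v ∈ Finset.Icc 1 n ∧
    ((u < v ∧ v ≤ m u) ∨ (v < u ∧ u ≤ m v))

/-- `l` is a partition of `n`: a weakly decreasing list of positive integers summing to `n`. -/
def IsPartitionOf (n : ℕ) (l : List ℕ) : Prop :=
  l.Pairwise (· ≥ ·) ∧ (∀ a ∈ l, 0 < a) ∧ l.sum = n

/-- The boxes of the Young diagram of `l`, as pairs `(row, column)` (`0`-indexed,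
rows numbered from the top). -/
def YBoxes (l : List ℕ) : Finset (ℕ × ℕ) :=
  (Finset.range l.length ×ˢ Finset.range l.sum).filter fun p => p.2 < l.getD p.1 0

/-- A tableau of shape `l`: a bijective filling of the boxes of the Young diagram of `l`
with the numbers `1,…,n` (normalized to be `0` off the diagram). -/
def IsTableau (n : ℕ) (l : List ℕ) (T : ℕ × ℕ → ℕ) : Prop :=
  (∀ p, p ∉ YBoxes l → T p = 0) ∧ Set.BijOn T (YBoxes l) (Finset.Icc 1 n)

/-- `T` is admissible for `m`: whenever an entry `k` occupies the box immediately to the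
left of an entry `j` in a row, then `k ≤ m j`. -/
def Admissible (m : ℕ → ℕ) (l : List ℕ) (T : ℕ × ℕ → ℕ) : Prop :=
  ∀ r c, (r, c) ∈ YBoxes l → (r, c + 1) ∈ YBoxes l → T (r, c) ≤ m (T (r, c + 1))

/-- The Tymoczko statistic `dim T`: the number of ordered pairs `(i,k)` of entries
(`i = T pp.1`, `k = T pp.2`) such that EITHER `i` and `k` are in the same row with `i`
to the left of `k`, `k < i`, and if some entry `j` occupies the box immediately to the
right of `k` then `i ≤ m j`; OR `i` is in a strictly lower row than `k` and `k < i ≤ m k`. -/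
def dimT (m : ℕ → ℕ) (l : List ℕ) (T : ℕ × ℕ → ℕ) : ℕ :=
  ((YBoxes l ×ˢ YBoxes l).filter fun pp =>
    (pp.1.1 = pp.2.1 ∧ pp.1.2 < pp.2.2 ∧ T pp.2 < T pp.1 ∧
      ((pp.2.1, pp.2.2 + 1) ∈ YBoxes l → T pp.1 ≤ m (T (pp.2.1, pp.2.2 + 1)))) ∨
    (pp.2.1 < pp.1.1 ∧ T pp.2 < T pp.1 ∧ T pp.1 ≤ m (T pp.2))).card

/-! Pairs in different rows are counted by the same condition on both sides, so only pairs in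
a common row matter. Fix the entry `i = T (r, c)` and scan the boxes `x > c` of row `r`, with
`u x` saying that `i ≤ m (T (r, x))` whenever `(r, x)` is a box. By admissibility `u (c + 1)`
holds, and `u` holds vacuously at the end of the row. If `T (r, x) ≥ i`, then
`i ≤ T (r, x) ≤ m (T (r, x)), m (T (r, x + 1))`, so `u` can only change value at an `x` with
`T (r, x) < i`; hence counting such `x` with `u (x + 1)` (the Tymoczko condition) gives the same
number as counting them with `u x`. -/

lemma IsHess.self_le {n : ℕ} {m : ℕ → ℕ} (hm : IsHess n m) {x : ℕ} (hx : x ∈ Icc 1 n) :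
    x ≤ m x := by
  rw [mem_Icc] at hx
  rcases hx.2.eq_or_lt with rfl | hlt
  · exact hm.2.2.ge
  · exact (hm.1 x hx.1 (Nat.le_pred_of_lt hlt)).1

lemma IsTableau.mem_Icc {n : ℕ} {l : List ℕ} {T : ℕ × ℕ → ℕ} (hT : IsTableau n l T)
    {p : ℕ × ℕ} (hp : p ∈ YBoxes l) : T p ∈ Icc 1 n := by
  simpa using hT.2.mapsTo (by simpa using hp)

lemma mk_mem_YBoxes_iff {l : List ℕ} {r x : ℕ} : (r, x) ∈ YBoxes l ↔ x < l.getD r 0 := by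
  simp only [YBoxes, mem_filter, mem_product, mem_range]
  refine ⟨fun h => h.2, fun h => ?_⟩
  have hr : r < l.length := by
    by_contra hr
    rw [List.getD_eq_default _ _ (not_lt.mp hr)] at h
    omega
  have hsum : l.getD r 0 ≤ l.sum := by
    rw [List.getD_eq_getElem l 0 hr]
    exact List.le_sum_of_mem (List.getElem_mem hr)
  exact ⟨⟨hr, h.trans_le hsum⟩, h⟩

lemma card_filter_YBoxes_row (l : List ℕ) (r c : ℕ) (P : ℕ × ℕ → Prop) [DecidablePred P] :
    #{b ∈ YBoxes l | r = b.1 ∧ c < b.2 ∧ P b}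
      = #{x ∈ Ico (c + 1) (l.getD r 0) | P (r, x)} := by
  refine card_nbij' Prod.snd (Prod.mk r) ?_ ?_ ?_ ?_ <;>
    simp +contextual [Set.MapsTo, Set.LeftInvOn, mk_mem_YBoxes_iff]

lemma card_filter_and_succ_add_ite {a b : ℕ} (hab : a ≤ b) (u v : ℕ → Prop)
    [DecidablePred u] [DecidablePred v]
    (h : ∀ x ∈ Ico a b, ¬ v x → (u x ↔ u (x + 1))) :
    #{x ∈ Ico a b | v x ∧ u (x + 1)} + (if u a then 1 else 0)
      = #{x ∈ Ico a b | v x ∧ u x} + (if u b then 1 else 0) := by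
  induction b, hab using Nat.le_induction with
  | base => simp
  | succ b hab ih =>
    have ih := ih fun x hx => h x (Ico_subset_Ico_right b.le_succ hx)
    have hb := h b (by simp [hab])
    rw [Nat.Ico_succ_right_eq_insert_Ico hab, filter_insert, filter_insert]
    by_cases v b <;> by_cases u b <;> by_cases u (b + 1) <;>
      simp_all [card_insert_of_notMem] <;> omega

lemma card_filter_and_succ_eq {a b : ℕ} (hab : a ≤ b) {u : ℕ → Prop} (v : ℕ → Prop)
    [DecidablePred u] [DecidablePred v] (hua : u a) (hub : u b)
    (h : ∀ x ∈ Ico a b, ¬ v x → (u x ↔ u (x + 1))) :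
    #{x ∈ Ico a b | v x ∧ u (x + 1)} = #{x ∈ Ico a b | v x ∧ u x} := by
  simpa [hua, hub] using card_filter_and_succ_add_ite hab u v h

lemma card_row_descents_eq {n : ℕ} {m : ℕ → ℕ} (hm : IsHess n m) {l : List ℕ}
    {T : ℕ × ℕ → ℕ} (hT : IsTableau n l T) (hadm : Admissible m l T) {r c : ℕ}
    (hrc : (r, c) ∈ YBoxes l) :
    #{b ∈ YBoxes l | r = b.1 ∧ c < b.2 ∧ T b < T (r, c) ∧
        ((b.1, b.2 + 1) ∈ YBoxes l → T (r, c) ≤ m (T (b.1, b.2 + 1)))}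
      = #{b ∈ YBoxes l | r = b.1 ∧ c < b.2 ∧ T b < T (r, c) ∧ T (r, c) ≤ m (T b)} := by
  simp only [card_filter_YBoxes_row]
  have hc : c < l.getD r 0 := mk_mem_YBoxes_iff.mp hrc
  have hself : ∀ p ∈ YBoxes l, T p ≤ m (T p) := fun p hp => hm.self_le (hT.mem_Icc hp)
  set i := T (r, c)
  let u x := (r, x) ∈ YBoxes l → i ≤ m (T (r, x))
  have hstart : u (c + 1) := hadm r c hrc
  have hend : u (l.getD r 0) := fun h => absurd (mk_mem_YBoxes_iff.mp h) (lt_irrefl _)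
  have htransitions :
      ∀ x ∈ Ico (c + 1) (l.getD r 0), ¬ T (r, x) < i → (u x ↔ u (x + 1)) := by
    intro x hx hix
    have hxbox : (r, x) ∈ YBoxes l := mk_mem_YBoxes_iff.mpr (mem_Ico.mp hx).2
    have hix : i ≤ T (r, x) := not_lt.mp hix
    exact iff_of_true (fun _ => hix.trans (hself _ hxbox)) fun h => hix.trans (hadm r x hxbox h)
  convert card_filter_and_succ_eq hc (fun x => T (r, x) < i) hstart hend htransitions using 2
  refine filter_congr fun x hx => and_congr_right fun _ => ?_
  exact (imp_iff_right (mk_mem_YBoxes_iff.mpr (mem_Ico.mp hx).2)).symm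

lemma card_sameRow_descents_eq {n : ℕ} {m : ℕ → ℕ} (hm : IsHess n m) {l : List ℕ}
    {T : ℕ × ℕ → ℕ} (hT : IsTableau n l T) (hadm : Admissible m l T) :
    #{pp ∈ YBoxes l ×ˢ YBoxes l | pp.1.1 = pp.2.1 ∧ pp.1.2 < pp.2.2 ∧ T pp.2 < T pp.1 ∧
        ((pp.2.1, pp.2.2 + 1) ∈ YBoxes l → T pp.1 ≤ m (T (pp.2.1, pp.2.2 + 1)))}
      = #{pp ∈ YBoxes l ×ˢ YBoxes l | (pp.1.1 = pp.2.1 ∧ pp.1.2 < pp.2.2) ∧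
        T pp.2 < T pp.1 ∧ T pp.1 ≤ m (T pp.2)} := by
  rw [card_filter, card_filter, sum_product, sum_product]
  refine sum_congr rfl fun ⟨r, c⟩ hrc => ?_
  rw [← card_filter, ← card_filter]
  simpa only [and_assoc] using card_row_descents_eq hm hT hadm hrc

theorem dimT_eq_unified_count_general
    (n : ℕ) (m : ℕ → ℕ) (hm : IsHess n m) (l : List ℕ)
    (T : ℕ × ℕ → ℕ) (hT : IsTableau n l T) (hadm : Admissible m l T) :
    dimT m l T
    = ((YBoxes l ×ˢ YBoxes l).filter fun pp =>
        ((pp.1.1 = pp.2.1 ∧ pp.1.2 < pp.2.2) ∨ pp.2.1 < pp.1.1) ∧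
        T pp.2 < T pp.1 ∧ T pp.1 ≤ m (T pp.2)).card := by
  unfold dimT
  simp only [or_and_right]
  rw [filter_or, filter_or, card_union_of_disjoint, card_union_of_disjoint,
    card_sameRow_descents_eq hm hT hadm]
  all_goals exact disjoint_filter.2 fun _ _ h1 h2 => by omega

/-- for an admissible tableau `T` of shape `l` for `m`, the Tymoczko
statistic `dim T` equals the number of ordered pairs `(i,k)` of entries such that
(`i` lies in the same row as `k` strictly to its left, or `i` lies in a strictly lower
row than `k`) and `k < i ≤ m k`. -/
theorem dimT_eq_unified_count
    (n : ℕ) (m : ℕ → ℕ) (hm : IsHess n m) (l : List ℕ) (hl : IsPartitionOf n l)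
    (T : ℕ × ℕ → ℕ) (hT : IsTableau n l T) (hadm : Admissible m l T) :
    dimT m l T
    = ((YBoxes l ×ˢ YBoxes l).filter fun pp =>
        ((pp.1.1 = pp.2.1 ∧ pp.1.2 < pp.2.2) ∨ pp.2.1 < pp.1.1) ∧
        T pp.2 < T pp.1 ∧ T pp.1 ≤ m (T pp.2)).card :=
  dimT_eq_unified_count_general n m hm l T hT hadm

end
end

section
/- Let m be a Hessenberg function of length n (with m_n = n), let λ=(λ_1≥⋯≥λ_ℓ) be a partition of n, and let α=(λ_ℓ, λ_{ℓ-1}, …, λ_1) be the composition obtained by reversing λ. Then for every d ≥ 0, the number of admissible tableaux T of shape λ for m with Tymoczko statistic dim(T)=d equals the number of sequencings q of [n] such that (q,α) is an ordered path cover of the complement digraph of D(m) with des q = d. (By Tymoczko's paving theorem, the left-hand side is the Betti number β_{2d} of the regular Hessenberg variety H(m,s) for s a regular matrix of Jordan type λ, and the right-hand side is the coefficient c_{d,λ}(m) of t^d m_λ in ω X_{G(m)}(x,t).) -/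
/-!
Reading a filling of the Young diagram of `λ` row by row, from the bottom row up and each row
from left to right, identifies fillings with sequencings `q` of `[n]`, the rows becoming the
blocks of `α = (λ_ℓ, …, λ_1)`. As `u → v` in the complement of `D(m)` means `u ≤ m_v`,
admissibility of `T` is exactly the path condition on `q`. For `v < u` the edge `v → u` of the
complement is automatic (`v < u ≤ m_u`), so `des q` counts the pairs `v < u ≤ m_v` with `u` read
before `v`. For pairs in different rows this is literally the second clause of `dim T`. Within a
row, fix an entry `i` and let `k` run over the entries to its right: `i ≤ m_k` can only fail when
`k < i` (since `k ≤ m_k`), and can only change value between neighbours `k, k'` when `k < i`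
(since `k ≤ m_{k'}`); so counting `k < i` with `i ≤ m_k` or with `i ≤ m_{k'}` gives the same
number: the switches telescope, and `i ≤ m` holds at both ends of the range (by admissibility
at the right neighbour of `i`, vacuously past the end of the row).
-/

open scoped Classical
open Finset

noncomputable section

lemma IsHess.le_self {n : ℕ} {m : ℕ → ℕ} (hm : IsHess n m) {u : ℕ} (hu : u ∈ Icc 1 n) :
    u ≤ m u := by
  rw [mem_Icc] at hu
  rcases hu.2.eq_or_lt with rfl | hlt
  · exact hm.2.2.ge
  · exact (hm.1 u hu.1 (by omega)).1

lemma IsOPC.length_eq_sum {V : Finset ℕ} {D : ℕ → ℕ → Prop} {q β : List ℕ}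
    (hq : IsOPC V D q β) : q.length = β.sum :=
  hq.2.1.2.symm

lemma dcomp_Dm_iff {n : ℕ} {m : ℕ → ℕ} {u v : ℕ} :
    Dcomp (Icc 1 n) (Dm n m) u v ↔ u ∈ Icc 1 n ∧ v ∈ Icc 1 n ∧ u ≠ v ∧ u ≤ m v := by
  simp only [Dcomp, Dm, not_and, not_lt]
  constructor
  · rintro ⟨hu, hv, hne, h⟩
    exact ⟨hu, hv, hne, h hu hv⟩
  · rintro ⟨hu, hv, hne, h⟩
    exact ⟨hu, hv, hne, fun _ _ => h⟩

lemma dcomp_Dm_comm_iff {n : ℕ} {m : ℕ → ℕ} (hm : ∀ u ∈ Icc 1 n, u ≤ m u) {u v : ℕ}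
    (hu : u ∈ Icc 1 n) (hv : v ∈ Icc 1 n) (hvu : v < u) :
    (Dcomp (Icc 1 n) (Dm n m) u v ↔ Dcomp (Icc 1 n) (Dm n m) v u) ↔ u ≤ m v := by
  have := hm u hu
  simp only [dcomp_Dm_iff, hu, hv, true_and, ne_eq, hvu.ne', hvu.ne, not_false_eq_true]
  omega

lemma card_filter_or_of_disjoint {α : Type*} (s : Finset α) {P Q : α → Prop}
    [DecidablePred P] [DecidablePred Q] (h : ∀ x ∈ s, P x → ¬ Q x) :
    #{x ∈ s | P x ∨ Q x} = #{x ∈ s | P x} + #{x ∈ s | Q x} := by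
  rw [filter_or, card_union_of_disjoint (disjoint_filter.mpr h)]

lemma card_filter_product_of_bijOn {α β : Type*} {s : Finset α} {t : Finset β} {T : α → β}
    (hT : Set.BijOn T s t) (P : β → β → Prop) [DecidableRel P] :
    #{y ∈ t ×ˢ t | P y.1 y.2} = #{x ∈ s ×ˢ s | P (T x.1) (T x.2)} := by
  symm
  refine card_nbij (Prod.map T T) ?_ ?_ ?_
  · rintro ⟨a, b⟩ hx
    simp only [coe_filter, mem_product, Set.mem_ofPred_eq] at hx ⊢
    exact ⟨⟨hT.mapsTo hx.1.1, hT.mapsTo hx.1.2⟩, hx.2⟩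
  · rintro ⟨a, b⟩ hx ⟨a', b'⟩ hx' h
    simp only [coe_filter, mem_product, Set.mem_ofPred_eq, Prod.map, Prod.mk.injEq] at hx hx' h
    exact Prod.ext (hT.injOn hx.1.1 hx'.1.1 h.1) (hT.injOn hx.1.2 hx'.1.2 h.2)
  · rintro ⟨u, v⟩ hy
    simp only [coe_filter, mem_product, Set.mem_ofPred_eq] at hy
    obtain ⟨a, ha, rfl⟩ := hT.surjOn hy.1.1
    obtain ⟨b, hb, rfl⟩ := hT.surjOn hy.1.2
    exact ⟨(a, b), by simpa using ⟨⟨ha, hb⟩, hy.2⟩, rfl⟩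

/-- `#{f t ∧ g (t + 1)} - #{f t ∧ g t}` is the number of `t` at which `g` switches on minus the
number at which it switches off (`f t` holds at every switch), which telescopes to `g b - g a`. -/
lemma card_filter_and_add_ite {f g : ℕ → Prop} [DecidablePred f] [DecidablePred g] {a b : ℕ}
    (hab : a ≤ b)
    (hf : ∀ t ∈ Ico a b, ¬ g t → f t) (hf' : ∀ t ∈ Ico a b, ¬ g (t + 1) → f t) :
    #{t ∈ Ico a b | f t ∧ g t} + (if g b then 1 else 0)
      = #{t ∈ Ico a b | f t ∧ g (t + 1)} + (if g a then 1 else 0) := by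
  induction b, hab using Nat.le_induction with
  | base => simp
  | succ b hab ih =>
    have hb : b ∈ Ico a (b + 1) := by simp only [mem_Ico]; omega
    replace ih := ih (fun t ht => hf t (Ico_subset_Ico_right b.le_succ ht))
      (fun t ht => hf' t (Ico_subset_Ico_right b.le_succ ht))
    have h1 := hf b hb
    have h2 := hf' b hb
    rw [card_filter, card_filter] at ih ⊢
    rw [sum_Ico_succ_top hab, sum_Ico_succ_top hab]
    by_cases g b <;> by_cases g (b + 1) <;> by_cases f b <;> simp_all <;> omega

section ReadingWord

variable {l : List ℕ}

lemma mem_YBoxes {p : ℕ × ℕ} : p ∈ YBoxes l ↔ p.1 < l.length ∧ p.2 < l.getD p.1 0 := by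
  simp only [YBoxes, mem_filter, mem_product, mem_range, and_congr_left_iff, and_iff_left_iff_imp]
  intro hc hr
  have := List.getD_eq_getElem l 0 hr ▸ List.le_sum_of_mem (List.getElem_mem hr)
  omega

lemma antitone_sum_drop (l : List ℕ) : Antitone fun r => (l.drop r).sum :=
  fun _ _ h => (List.drop_sublist_drop_left l h).sum_le_sum fun _ _ => Nat.zero_le _

lemma sum_drop_eq_getD_add {r : ℕ} (hr : r < l.length) :
    (l.drop r).sum = l.getD r 0 + (l.drop (r + 1)).sum := by
  rw [List.drop_eq_getElem_cons hr, List.sum_cons, List.getD_eq_getElem l 0 hr]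

/-- The position of box `p` in the reading word, which reads the rows from the bottom row up,
each from left to right: `(l.drop (r + 1)).sum` is the number of boxes below row `r`. -/
def readIdx (l : List ℕ) (p : ℕ × ℕ) : ℕ := (l.drop (p.1 + 1)).sum + p.2

lemma readIdx_right (p : ℕ × ℕ) : readIdx l (p.1, p.2 + 1) = readIdx l p + 1 := rfl

lemma readIdx_lt_sum_drop {p : ℕ × ℕ} (hp : p ∈ YBoxes l) : readIdx l p < (l.drop p.1).sum := by
  rw [mem_YBoxes] at hp
  rw [sum_drop_eq_getD_add hp.1, readIdx]
  omega

lemma readIdx_lt_sum {p : ℕ × ℕ} (hp : p ∈ YBoxes l) : readIdx l p < l.sum :=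
  (readIdx_lt_sum_drop hp).trans_le (antitone_sum_drop l (Nat.zero_le p.1))

lemma readIdx_lt_readIdx_iff {p p' : ℕ × ℕ} (hp : p ∈ YBoxes l) (hp' : p' ∈ YBoxes l) :
    readIdx l p < readIdx l p' ↔ p'.1 < p.1 ∨ (p.1 = p'.1 ∧ p.2 < p'.2) := by
  have below : ∀ {x y : ℕ × ℕ}, x ∈ YBoxes l → y.1 < x.1 → readIdx l x < readIdx l y :=
    fun {x y} hx hxy => (readIdx_lt_sum_drop hx).trans_le
      ((antitone_sum_drop l hxy).trans (Nat.le_add_right _ _))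
  rcases lt_trichotomy p.1 p'.1 with h | h | h
  · have := below hp' h
    omega
  · simp only [readIdx, h, lt_irrefl, false_or, true_and, add_lt_add_iff_left]
  · have := below hp h
    omega

lemma injOn_readIdx : Set.InjOn (readIdx l) (YBoxes l) := by
  intro p hp p' hp' h
  have h1 := readIdx_lt_readIdx_iff hp hp'
  have h2 := readIdx_lt_readIdx_iff hp' hp
  exact Prod.ext (by omega) (by omega)

lemma exists_readIdx_eq {k : ℕ} (hk : k < l.sum) : ∃ p ∈ YBoxes l, readIdx l p = k := by
  induction l with
  | nil => simp at hk
  | cons a l ih =>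
    simp only [List.sum_cons] at hk
    by_cases hkl : k < l.sum
    · obtain ⟨⟨r, c⟩, hp, rfl⟩ := ih hkl
      rw [mem_YBoxes] at hp
      exact ⟨(r + 1, c), mem_YBoxes.mpr (by simpa using hp), by simp [readIdx]⟩
    · exact ⟨(0, k - l.sum), mem_YBoxes.mpr (by simp; omega), by simp [readIdx]; omega⟩

lemma bijOn_readIdx : Set.BijOn (readIdx l) (YBoxes l) (Set.Iio l.sum) :=
  ⟨fun _ hp => readIdx_lt_sum hp, injOn_readIdx,
    fun _ hk => by simpa using exists_readIdx_eq (Set.mem_Iio.mp hk)⟩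

def boxAt (l : List ℕ) (k : ℕ) : ℕ × ℕ := Function.invFunOn (readIdx l) (YBoxes l) k

lemma boxAt_mem {k : ℕ} (hk : k < l.sum) : boxAt l k ∈ YBoxes l :=
  Function.invFunOn_mem (by simpa using exists_readIdx_eq hk)

lemma readIdx_boxAt {k : ℕ} (hk : k < l.sum) : readIdx l (boxAt l k) = k :=
  Function.invFunOn_eq (by simpa using exists_readIdx_eq hk)

lemma boxAt_readIdx {p : ℕ × ℕ} (hp : p ∈ YBoxes l) : boxAt l (readIdx l p) = p :=
  injOn_readIdx.leftInvOn_invFunOn hp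

lemma mem_barSet_reverse {s : ℕ} :
    s ∈ barSet l.reverse ↔ ∃ j, 0 < j ∧ j < l.length ∧ s = (l.drop j).sum := by
  simp only [barSet, Set.mem_ofPred_eq, List.length_reverse, List.take_reverse, List.sum_reverse]
  constructor
  · rintro ⟨i, hi, hil, rfl⟩
    exact ⟨l.length - i, by omega, by omega, rfl⟩
  · rintro ⟨j, hj, hjl, rfl⟩
    exact ⟨l.length - j, by omega, by omega, by rw [Nat.sub_sub_self hjl.le]⟩

lemma right_mem_YBoxes_iff {p : ℕ × ℕ} (hp : p ∈ YBoxes l) :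
    (p.1, p.2 + 1) ∈ YBoxes l ↔ readIdx l p + 1 < l.sum ∧ readIdx l p + 1 ∉ barSet l.reverse := by
  have hrow := sum_drop_eq_getD_add (mem_YBoxes.mp hp).1
  have hcol := (mem_YBoxes.mp hp).2
  rw [mem_YBoxes, mem_barSet_reverse]
  simp only [readIdx] at hrow ⊢
  constructor
  · rintro ⟨-, hc⟩
    refine ⟨?_, ?_⟩
    · have : (l.drop p.1).sum ≤ l.sum := antitone_sum_drop l (Nat.zero_le p.1)
      omega
    · rintro ⟨j, -, -, hj⟩
      rcases le_or_gt j p.1 with hjr | hjr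
      · have : (l.drop p.1).sum ≤ (l.drop j).sum := antitone_sum_drop l hjr
        omega
      · have : (l.drop j).sum ≤ (l.drop (p.1 + 1)).sum := antitone_sum_drop l hjr
        omega
  · rintro ⟨hlt, hbar⟩
    refine ⟨(mem_YBoxes.mp hp).1, ?_⟩
    by_contra hc
    rcases Nat.eq_zero_or_pos p.1 with h0 | h0
    · rw [h0] at hrow
      simp only [List.drop_zero, h0] at hrow hlt hc
      omega
    · exact hbar ⟨p.1, h0, (mem_YBoxes.mp hp).1, by omega⟩

end ReadingWord

section Correspondence

variable {l : List ℕ}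

def readingWord (l : List ℕ) (T : ℕ × ℕ → ℕ) : List ℕ :=
  (List.range l.sum).map fun k => T (boxAt l k)

def tableauOfWord (l q : List ℕ) (p : ℕ × ℕ) : ℕ :=
  if p ∈ YBoxes l then q.getD (readIdx l p) 0 else 0

@[simp]
lemma length_readingWord (T : ℕ × ℕ → ℕ) : (readingWord l T).length = l.sum := by
  simp [readingWord]

lemma getD_readingWord (T : ℕ × ℕ → ℕ) {k : ℕ} (hk : k < l.sum) :
    (readingWord l T).getD k 0 = T (boxAt l k) := by
  simp [readingWord, hk]

lemma getD_readingWord_readIdx (T : ℕ × ℕ → ℕ) {p : ℕ × ℕ} (hp : p ∈ YBoxes l) :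
    (readingWord l T).getD (readIdx l p) 0 = T p := by
  rw [getD_readingWord T (readIdx_lt_sum hp), boxAt_readIdx hp]

lemma nodup_readingWord {T : ℕ × ℕ → ℕ} (hT : Set.InjOn T (YBoxes l)) :
    (readingWord l T).Nodup := by
  refine List.Nodup.map_on (fun x hx y hy h => ?_) List.nodup_range
  rw [List.mem_range] at hx hy
  rw [← readIdx_boxAt hx, ← readIdx_boxAt hy, hT (boxAt_mem hx) (boxAt_mem hy) h]

lemma isSeq_readingWord {V : Finset ℕ} {T : ℕ × ℕ → ℕ} (hT : Set.BijOn T (YBoxes l) V) :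
    IsSeq V (readingWord l T) := by
  refine ⟨nodup_readingWord hT.injOn, ?_⟩
  ext u
  simp only [readingWord, List.mem_toFinset, List.mem_map, List.mem_range]
  constructor
  · rintro ⟨k, hk, rfl⟩
    exact hT.mapsTo (boxAt_mem hk)
  · intro hu
    obtain ⟨p, hp, rfl⟩ := hT.surjOn (mem_coe.mpr hu)
    exact ⟨readIdx l p, readIdx_lt_sum hp, by rw [boxAt_readIdx hp]⟩

lemma idxOf_readingWord {T : ℕ × ℕ → ℕ} (hT : Set.InjOn T (YBoxes l)) {p : ℕ × ℕ}
    (hp : p ∈ YBoxes l) : (readingWord l T).idxOf (T p) = readIdx l p := by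
  have hk : readIdx l p < (readingWord l T).length := by simpa using readIdx_lt_sum hp
  have := (nodup_readingWord hT).idxOf_getElem _ hk
  rwa [← List.getD_eq_getElem _ 0 hk, getD_readingWord_readIdx T hp] at this

lemma readingWord_tableauOfWord {q : List ℕ} (hq : q.length = l.sum) :
    readingWord l (tableauOfWord l q) = q := by
  refine List.ext_getElem (by simp [hq]) fun k hk _ => ?_
  rw [length_readingWord] at hk
  rw [← List.getD_eq_getElem _ 0, getD_readingWord _ hk, tableauOfWord,
    if_pos (boxAt_mem hk), readIdx_boxAt hk, List.getD_eq_getElem]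

lemma tableauOfWord_readingWord {T : ℕ × ℕ → ℕ} (hT : ∀ p ∉ YBoxes l, T p = 0) :
    tableauOfWord l (readingWord l T) = T := by
  funext p
  by_cases hp : p ∈ YBoxes l
  · rw [tableauOfWord, if_pos hp, getD_readingWord_readIdx T hp]
  · rw [tableauOfWord, if_neg hp, hT p hp]

lemma bijOn_getD_of_nodup {q : List ℕ} (hq : q.Nodup) :
    Set.BijOn (fun k => q.getD k 0) (Set.Iio q.length) q.toFinset := by
  refine ⟨fun k hk => ?_, fun i hi j hj h => ?_, fun u hu => ?_⟩
  · simp only [Set.mem_Iio] at hk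
    simp only [mem_coe, List.mem_toFinset, List.getD_eq_getElem _ 0 hk, List.getElem_mem]
  · simp only [Set.mem_Iio] at hi hj
    simp only [List.getD_eq_getElem _ 0 hi, List.getD_eq_getElem _ 0 hj] at h
    exact hq.getElem_inj_iff.mp h
  · obtain ⟨k, hk, rfl⟩ := List.mem_iff_getElem.mp (List.mem_toFinset.mp hu)
    exact ⟨k, hk, List.getD_eq_getElem _ 0 hk⟩

lemma isTableau_tableauOfWord {n : ℕ} {q : List ℕ} (hq : IsSeq (Icc 1 n) q)
    (hlen : q.length = l.sum) : IsTableau n l (tableauOfWord l q) := by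
  refine ⟨fun p hp => if_neg hp, ?_⟩
  have h := bijOn_getD_of_nodup hq.1
  rw [hq.2, hlen] at h
  exact (h.comp bijOn_readIdx).congr fun p hp => (if_pos hp).symm

end Correspondence

section PathCovers

variable {l : List ℕ} {n : ℕ} {m : ℕ → ℕ}

lemma isOPC_readingWord {T : ℕ × ℕ → ℕ} (hl : ∀ a ∈ l, 0 < a)
    (hT : Set.BijOn T (YBoxes l) (Icc 1 n)) (hA : Admissible m l T) :
    IsOPC (Icc 1 n) (Dcomp (Icc 1 n) (Dm n m)) (readingWord l T) l.reverse := by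
  refine ⟨isSeq_readingWord hT, ⟨fun a ha => hl a (List.mem_reverse.mp ha), by simp⟩, ?_⟩
  intro k hk hbar
  rw [length_readingWord] at hk
  have hp : boxAt l k ∈ YBoxes l := boxAt_mem (by omega)
  have hpk : readIdx l (boxAt l k) = k := readIdx_boxAt (by omega)
  have hright := (right_mem_YBoxes_iff hp).mpr ⟨by omega, by rwa [hpk]⟩
  have hnext : boxAt l (k + 1) = ((boxAt l k).1, (boxAt l k).2 + 1) := by
    rw [← boxAt_readIdx hright, readIdx_right, hpk]
  rw [getD_readingWord T (by omega), getD_readingWord T hk, hnext, dcomp_Dm_iff]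
  refine ⟨hT.mapsTo hp, hT.mapsTo hright, fun h => ?_, hA _ _ hp hright⟩
  simpa using congrArg Prod.snd (hT.injOn hp hright h)

lemma admissible_tableauOfWord {q : List ℕ}
    (hq : IsOPC (Icc 1 n) (Dcomp (Icc 1 n) (Dm n m)) q l.reverse) :
    Admissible m l (tableauOfWord l q) := by
  intro r c hp hright
  have hlen : q.length = l.sum := by rw [hq.length_eq_sum, List.sum_reverse]
  obtain ⟨hnext, hbar⟩ := (right_mem_YBoxes_iff hp).mp hright
  have hD := hq.2.2 _ (hlen ▸ hnext) hbar
  rw [dcomp_Dm_iff, ← readIdx_right] at hD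
  simpa only [tableauOfWord, if_pos hp, if_pos hright] using hD.2.2.2

end PathCovers

section Statistics

variable {l : List ℕ} {n : ℕ} {m : ℕ → ℕ} {T : ℕ × ℕ → ℕ}

lemma desStat_readingWord (hm : ∀ u ∈ Icc 1 n, u ≤ m u) (hT : Set.BijOn T (YBoxes l) (Icc 1 n)) :
    desStat (Dcomp (Icc 1 n) (Dm n m)) (readingWord l T) =
      #{x ∈ YBoxes l ×ˢ YBoxes l |
        readIdx l x.1 < readIdx l x.2 ∧ T x.2 < T x.1 ∧ T x.1 ≤ m (T x.2)} := by
  rw [desStat, (isSeq_readingWord hT).2, card_filter_product_of_bijOn hT fun u v =>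
    v < u ∧ (readingWord l T).idxOf u < (readingWord l T).idxOf v ∧
      (Dcomp (Icc 1 n) (Dm n m) u v ↔ Dcomp (Icc 1 n) (Dm n m) v u)]
  refine congrArg card (filter_congr fun x hx => ?_)
  rw [mem_product] at hx
  rw [idxOf_readingWord hT.injOn hx.1, idxOf_readingWord hT.injOn hx.2]
  constructor
  · rintro ⟨hlt, hidx, hD⟩
    exact ⟨hidx, hlt, (dcomp_Dm_comm_iff hm (hT.mapsTo hx.1) (hT.mapsTo hx.2) hlt).mp hD⟩
  · rintro ⟨hidx, hlt, hle⟩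
    exact ⟨hlt, hidx, (dcomp_Dm_comm_iff hm (hT.mapsTo hx.1) (hT.mapsTo hx.2) hlt).mpr hle⟩

lemma card_sameRow_filter (l : List ℕ) (P : ℕ × ℕ → ℕ × ℕ → Prop) [DecidableRel P] :
    #{x ∈ YBoxes l ×ˢ YBoxes l | x.1.1 = x.2.1 ∧ x.1.2 < x.2.2 ∧ P x.1 x.2}
      = ∑ p ∈ YBoxes l, #{c ∈ Ico (p.2 + 1) (l.getD p.1 0) | P p (p.1, c)} := by
  rw [← card_sigma]
  refine card_nbij' (fun x => ⟨x.1, x.2.2⟩) (fun y => (y.1, (y.1.1, y.2))) ?_ ?_ ?_ ?_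
  · rintro ⟨p, r, c⟩ hx
    simp only [coe_filter, mem_product, Set.mem_ofPred_eq] at hx
    obtain ⟨⟨hp, hrc⟩, rfl, hlt, hP⟩ := hx
    simp only [coe_sigma, Set.mem_sigma_iff, mem_coe, mem_filter, mem_Ico]
    exact ⟨hp, ⟨hlt, (mem_YBoxes.mp hrc).2⟩, hP⟩
  · rintro ⟨p, c⟩ hy
    simp only [coe_sigma, Set.mem_sigma_iff, mem_coe, mem_filter, mem_Ico] at hy
    obtain ⟨hp, ⟨hlt, hc⟩, hP⟩ := hy
    simp only [coe_filter, mem_product, Set.mem_ofPred_eq]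
    exact ⟨⟨hp, mem_YBoxes.mpr ⟨(mem_YBoxes.mp hp).1, hc⟩⟩, trivial, hlt, hP⟩
  · rintro ⟨p, r, c⟩ hx
    simp only [coe_filter, mem_product, Set.mem_ofPred_eq] at hx
    obtain ⟨-, rfl, -⟩ := hx
    rfl
  · intro _ _
    rfl

lemma card_sameRow_eq (hm : ∀ u ∈ Icc 1 n, u ≤ m u) (hT : Set.MapsTo T (YBoxes l) (Icc 1 n))
    (hA : Admissible m l T) :
    #{x ∈ YBoxes l ×ˢ YBoxes l |
        x.1.1 = x.2.1 ∧ x.1.2 < x.2.2 ∧ T x.2 < T x.1 ∧ T x.1 ≤ m (T x.2)}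
      = #{x ∈ YBoxes l ×ˢ YBoxes l | x.1.1 = x.2.1 ∧ x.1.2 < x.2.2 ∧ T x.2 < T x.1 ∧
          ((x.2.1, x.2.2 + 1) ∈ YBoxes l → T x.1 ≤ m (T (x.2.1, x.2.2 + 1)))} := by
  rw [card_sameRow_filter l fun x y => T y < T x ∧ T x ≤ m (T y),
    card_sameRow_filter l fun x y =>
      T y < T x ∧ ((y.1, y.2 + 1) ∈ YBoxes l → T x ≤ m (T (y.1, y.2 + 1)))]
  refine sum_congr rfl fun p hp => ?_
  obtain ⟨hr, hc⟩ := mem_YBoxes.mp hp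
  have hbox : ∀ c ∈ Ico (p.2 + 1) (l.getD p.1 0), (p.1, c) ∈ YBoxes l :=
    fun c hc' => mem_YBoxes.mpr ⟨hr, (mem_Ico.mp hc').2⟩
  set g : ℕ → Prop := fun c => (p.1, c) ∈ YBoxes l → T p ≤ m (T (p.1, c))
  have key := card_filter_and_add_ite (f := fun c => T (p.1, c) < T p) (g := g) hc
    (fun c hc' hg => by
      simp only [g, Classical.not_imp, not_le] at hg
      have := hm _ (hT hg.1)
      omega)
    (fun c hc' hg => by
      simp only [g, Classical.not_imp, not_le] at hg
      have := hA _ _ (hbox c hc') hg.1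
      omega)
  have hga : g (p.2 + 1) := hA _ _ hp
  have hgb : g (l.getD p.1 0) := fun h => absurd (mem_YBoxes.mp h).2 (lt_irrefl _)
  rw [if_pos hga, if_pos hgb, add_left_inj] at key
  refine Eq.trans (congrArg card (filter_congr fun c hc' => ?_)) key
  simp only [g, hbox c hc', true_implies]

lemma dimT_eq_card_inversions (hm : ∀ u ∈ Icc 1 n, u ≤ m u)
    (hT : Set.MapsTo T (YBoxes l) (Icc 1 n)) (hA : Admissible m l T) :
    dimT m l T = #{x ∈ YBoxes l ×ˢ YBoxes l |
      readIdx l x.1 < readIdx l x.2 ∧ T x.2 < T x.1 ∧ T x.1 ≤ m (T x.2)} := by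
  have hsplit : #{x ∈ YBoxes l ×ˢ YBoxes l |
      readIdx l x.1 < readIdx l x.2 ∧ T x.2 < T x.1 ∧ T x.1 ≤ m (T x.2)}
      = #{x ∈ YBoxes l ×ˢ YBoxes l |
        (x.1.1 = x.2.1 ∧ x.1.2 < x.2.2 ∧ T x.2 < T x.1 ∧ T x.1 ≤ m (T x.2)) ∨
          (x.2.1 < x.1.1 ∧ T x.2 < T x.1 ∧ T x.1 ≤ m (T x.2))} := by
    refine congrArg card (filter_congr fun x hx => ?_)
    rw [mem_product] at hx
    rw [readIdx_lt_readIdx_iff hx.1 hx.2]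
    tauto
  rw [dimT, hsplit, card_filter_or_of_disjoint _ fun x _ h h' => by omega,
    card_filter_or_of_disjoint _ fun x _ h h' => by omega, card_sameRow_eq hm hT hA]

end Statistics

/-- Theorem on Betti numbers of regular Hessenberg varieties,
combinatorial form: for a Hessenberg function `m` of length `n`, a partition `l` of `n`,
and `α = l.reverse` the reversed composition, the number of admissible tableaux of shape
`l` for `m` with Tymoczko statistic `d` equals the number of sequencings `q` of `[n]`
such that `(q, α)` is an ordered path cover of the complement digraph of `D(m)` with
`des q = d`. -/
theorem tableau_count_eq_opc_count
    (n d : ℕ) (m : ℕ → ℕ) (hm : IsHess n m) (l : List ℕ) (hl : IsPartitionOf n l) :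
    Nat.card {T : ℕ × ℕ → ℕ //
        IsTableau n l T ∧ Admissible m l T ∧ dimT m l T = d}
    = Nat.card {q : List ℕ //
        IsOPC (Finset.Icc 1 n) (Dcomp (Finset.Icc 1 n) (Dm n m)) q l.reverse ∧
        desStat (Dcomp (Finset.Icc 1 n) (Dm n m)) q = d} := by
  have hle : ∀ u ∈ Icc 1 n, u ≤ m u := fun _ => hm.le_self
  have hstat : ∀ T, IsTableau n l T → Admissible m l T →
      desStat (Dcomp (Icc 1 n) (Dm n m)) (readingWord l T) = dimT m l T := fun T hT hA =>
    (desStat_readingWord hle hT.2).trans (dimT_eq_card_inversions hle hT.2.mapsTo hA).symm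
  have hlen : ∀ q, IsOPC (Icc 1 n) (Dcomp (Icc 1 n) (Dm n m)) q l.reverse → q.length = l.sum :=
    fun q hq => by rw [hq.length_eq_sum, List.sum_reverse]
  exact Nat.card_congr
    { toFun := fun T => ⟨readingWord l T, isOPC_readingWord hl.2.1 T.2.1.2 T.2.2.1,
        (hstat T T.2.1 T.2.2.1).trans T.2.2.2⟩
      invFun := fun q =>
        have hT := isTableau_tableauOfWord q.2.1.1 (hlen q q.2.1)
        have hA := admissible_tableauOfWord q.2.1
        ⟨tableauOfWord l q, hT, hA, by
          rw [← hstat _ hT hA, readingWord_tableauOfWord (hlen q q.2.1)]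
          exact q.2.2⟩
      left_inv := fun T => Subtype.ext (tableauOfWord_readingWord T.2.1.1)
      right_inv := fun q => Subtype.ext (readingWord_tableauOfWord (hlen q q.2.1)) }

end
end

section
/- Let q and p_0, p_1, …, p_N be Laurent polynomials with real coefficients such that q = Σ_{ℓ=0}^{N} p_ℓ t^ℓ. Assume q is palindromic, each p_ℓ is palindromic, and for every ℓ > 0 all coefficients of p_ℓ are nonnegative. Then p_ℓ = 0 for all ℓ > 0, and hence q = p_0. -/
/-!
The first moment `coeffMoment p = ∑ k * p_k`, i.e. `p'(1)`, changes sign under `t ↦ t⁻¹`, so it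
vanishes on palindromic Laurent polynomials; and multiplying by `tⁿ` adds `n * p(1)` to it, where
`p(1) = coeffSum p`. Applied to `q` this gives `0 = ∑ ℓ * p_ℓ(1)`, a sum of nonnegative terms, so
`p_ℓ(1) = 0` for `ℓ > 0`; and a Laurent polynomial with nonnegative coefficients summing to zero
is zero.
-/

open LaurentPolynomial

/-- A Laurent polynomial is palindromic if it is invariant under `t ↦ t⁻¹`. -/
def Palindromic (p : LaurentPolynomial ℝ) : Prop := LaurentPolynomial.invert p = p

namespace LaurentPolynomial

variable {R : Type*}

section Semiring

variable [Semiring R]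

noncomputable def coeffSum : R[T;T⁻¹] →+ R :=
  (Finsupp.liftAddHom fun _ => AddMonoidHom.id R).comp
    AddMonoidAlgebra.coeffAddEquiv.toAddMonoidHom

theorem coeffSum_apply (p : R[T;T⁻¹]) : coeffSum p = p.coeff.sum fun _ a => a := rfl

theorem coeffSum_C_mul_T (a : R) (n : ℤ) : coeffSum (C a * T n) = a := by
  simp [coeffSum_apply, ← single_eq_C_mul_T]

theorem coeffSum_nonneg [PartialOrder R] [IsOrderedAddMonoid R] {p : R[T;T⁻¹]}
    (hp : ∀ k, 0 ≤ p.coeff k) : 0 ≤ coeffSum p :=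
  Finset.sum_nonneg fun k _ => hp k

theorem eq_zero_of_coeffSum_eq_zero [PartialOrder R] [IsOrderedAddMonoid R] {p : R[T;T⁻¹]}
    (hp : ∀ k, 0 ≤ p.coeff k) (h : coeffSum p = 0) : p = 0 := by
  ext k
  rw [coeffSum_apply, Finsupp.sum, Finset.sum_eq_zero_iff_of_nonneg fun k _ => hp k] at h
  by_cases hk : k ∈ p.coeff.support
  · simpa using h k hk
  · simpa using hk

end Semiring

section Ring

variable [CommRing R]

noncomputable def coeffMoment : R[T;T⁻¹] →+ R :=
  (Finsupp.liftAddHom fun k : ℤ => AddMonoidHom.mulLeft (k : R)).comp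
    AddMonoidAlgebra.coeffAddEquiv.toAddMonoidHom

theorem coeffMoment_C_mul_T (a : R) (n : ℤ) : coeffMoment (C a * T n) = n * a := by
  simp [coeffMoment, ← single_eq_C_mul_T]

theorem coeffMoment_invert (p : R[T;T⁻¹]) : coeffMoment (invert p) = -coeffMoment p := by
  induction p using LaurentPolynomial.induction_on' with
  | add p q hp hq => rw [map_add, map_add, map_add, hp, hq, neg_add]
  | C_mul_T n a => simp [coeffMoment_C_mul_T]

theorem coeffMoment_mul_T (p : R[T;T⁻¹]) (n : ℤ) :
    coeffMoment (p * T n) = n * coeffSum p + coeffMoment p := by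
  induction p using LaurentPolynomial.induction_on' with
  | add p q hp hq => simp only [add_mul, map_add, hp, hq]; ring
  | C_mul_T m a =>
    rw [mul_T_assoc, coeffMoment_C_mul_T, coeffMoment_C_mul_T, coeffSum_C_mul_T]
    push_cast; ring

end Ring

end LaurentPolynomial

theorem Palindromic.coeffMoment_eq_zero {p : ℝ[T;T⁻¹]} (hp : Palindromic p) :
    coeffMoment p = 0 := by
  have h := coeffMoment_invert p
  rw [hp] at h
  linarith

/-- if `q = Σ_{ℓ=0}^{N} p_ℓ t^ℓ` with `q` and all `p_ℓ` palindromic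
Laurent polynomials, and for every `ℓ > 0` all coefficients of `p_ℓ` are nonnegative,
then `p_ℓ = 0` for all `ℓ > 0`, and hence `q = p_0`. -/
theorem palindromic_decomposition
    (N : ℕ) (q : LaurentPolynomial ℝ) (p : ℕ → LaurentPolynomial ℝ)
    (hq : q = ∑ ℓ ∈ Finset.range (N + 1), p ℓ * T (ℓ : ℤ))
    (hqpal : Palindromic q) (hppal : ∀ ℓ ≤ N, Palindromic (p ℓ))
    (hnonneg : ∀ ℓ, 0 < ℓ → ℓ ≤ N → ∀ k : ℤ, 0 ≤ (p ℓ).coeff k) :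
    (∀ ℓ, 0 < ℓ → ℓ ≤ N → p ℓ = 0) ∧ q = p 0 := by
  have hmoment : ∑ ℓ ∈ Finset.range (N + 1), (ℓ : ℝ) * coeffSum (p ℓ) = 0 := by
    rw [← hqpal.coeffMoment_eq_zero, hq, map_sum]
    refine Finset.sum_congr rfl fun ℓ hℓ => ?_
    have hpal := hppal ℓ (Finset.mem_range_succ_iff.mp hℓ)
    rw [coeffMoment_mul_T, hpal.coeffMoment_eq_zero, add_zero, Int.cast_natCast]
  have hterm_nonneg : ∀ ℓ ∈ Finset.range (N + 1), 0 ≤ (ℓ : ℝ) * coeffSum (p ℓ) := by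
    intro ℓ hℓ
    rcases Nat.eq_zero_or_pos ℓ with rfl | hpos
    · simp
    · exact mul_nonneg ℓ.cast_nonneg
        (coeffSum_nonneg (hnonneg ℓ hpos (Finset.mem_range_succ_iff.mp hℓ)))
  have hvanish : ∀ ℓ, 0 < ℓ → ℓ ≤ N → p ℓ = 0 := by
    intro ℓ hpos hle
    have hterm := (Finset.sum_eq_zero_iff_of_nonneg hterm_nonneg).mp hmoment ℓ
      (Finset.mem_range_succ_iff.mpr hle)
    refine eq_zero_of_coeffSum_eq_zero (hnonneg ℓ hpos hle) ?_
    exact (mul_eq_zero.mp hterm).resolve_left (Nat.cast_ne_zero.mpr hpos.ne')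
  refine ⟨hvanish, ?_⟩
  rw [hq, Finset.sum_eq_single 0 (fun ℓ hℓ h0 => ?_) (by simp)]
  · rw [Nat.cast_zero, T_zero, mul_one]
  · rw [hvanish ℓ (Nat.pos_of_ne_zero h0) (Finset.mem_range_succ_iff.mp hℓ), zero_mul]
end

section
/- Let X be a topological space, Y a subset of X, and x a point of X. Suppose {𝒰_α}_{α∈I} is a nonempty collection of fundamental systems of open neighborhoods of x, each of which is good relative to Y. Then the union 𝒰 := ⋃_{α∈I} 𝒰_α is also a fundamental system of open neighborhoods of x that is good relative to Y. -/
/-!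
Let `U ⊇ V` with `U ∈ 𝒰 a` and `V ∈ 𝒰 b`. Choose `W ∈ 𝒰 a` inside `V` and then `W' ∈ 𝒰 b` inside
`W`. In the chain `W' ∖ Y ⊆ W ∖ Y ⊆ V ∖ Y ⊆ U ∖ Y` the inclusions `W' ∖ Y ⊆ V ∖ Y` and
`W ∖ Y ⊆ U ∖ Y` are homotopy equivalences, since each stays inside one good system; the
two-out-of-six argument then makes `V ∖ Y ⊆ U ∖ Y` a homotopy equivalence as well.
-/

/-- `𝒰` is a fundamental system of open neighborhoods of `x`. -/
def IsFundamentalSystem {X : Type*} [TopologicalSpace X] (x : X) (𝒰 : Set (Set X)) : Prop :=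
  (∀ U ∈ 𝒰, IsOpen U ∧ x ∈ U) ∧ ∀ W : Set X, IsOpen W → x ∈ W → ∃ U ∈ 𝒰, U ⊆ W

/-- A collection `𝒰` of subsets of `X` is good relative to `Y` if for all `U, V ∈ 𝒰` with
`V ⊆ U`, the inclusion `V∖Y ↪ U∖Y` is a homotopy equivalence: there is a continuous map
`r : U∖Y → V∖Y` such that both composites with the inclusion are homotopic to the
identity. -/
def IsGoodRel {X : Type*} [TopologicalSpace X] (Y : Set X) (𝒰 : Set (Set X)) : Prop :=
  ∀ U ∈ 𝒰, ∀ V ∈ 𝒰, ∀ h : V ⊆ U,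
    ∃ r : C(↥(U \ Y), ↥(V \ Y)),
      (r.comp ⟨Set.inclusion (Set.diff_subset_diff_left h),
          continuous_inclusion (Set.diff_subset_diff_left h)⟩).Homotopic
        (ContinuousMap.id _) ∧
      ((⟨Set.inclusion (Set.diff_subset_diff_left h),
          continuous_inclusion (Set.diff_subset_diff_left h)⟩ :
            C(↥(V \ Y), ↥(U \ Y))).comp r).Homotopic
        (ContinuousMap.id _)

namespace ContinuousMap

variable {A B C D : Type*} [TopologicalSpace A] [TopologicalSpace B] [TopologicalSpace C]
  [TopologicalSpace D]

def IsHomotopyEquiv (f : C(A, B)) : Prop :=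
  ∃ g : C(B, A), (g.comp f).Homotopic (.id A) ∧ (f.comp g).Homotopic (.id B)

theorem IsHomotopyEquiv.of_comp_of_rightInverse {a : C(A, B)} {b : C(B, C)} {c : C(C, D)}
    {p : C(C, A)} (hp : ((b.comp a).comp p).Homotopic (.id C))
    (hcb : (c.comp b).IsHomotopyEquiv) : c.IsHomotopyEquiv := by
  obtain ⟨q, hqcb, hcbq⟩ := hcb
  -- `b ∘ q` is a homotopy inverse of `c`
  refine ⟨b.comp q, ?_, by simpa only [comp_assoc] using hcbq⟩
  have h_insert : ((b.comp q).comp c).Homotopic (((b.comp q).comp c).comp ((b.comp a).comp p)) :=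
    by simpa only [comp_id] using (Homotopic.refl ((b.comp q).comp c)).comp hp.symm
  have h_cancel : (((b.comp q).comp c).comp b).Homotopic b := by
    simpa only [comp_assoc, comp_id] using (Homotopic.refl b).comp hqcb
  have h_collapse : (((b.comp q).comp c).comp ((b.comp a).comp p)).Homotopic
      ((b.comp a).comp p) := by
    simpa only [comp_assoc] using (h_cancel.comp (Homotopic.refl a)).comp (Homotopic.refl p)
  exact (h_insert.trans h_collapse).trans hp

end ContinuousMap

section GoodFundamentalSystems

variable {X : Type*} [TopologicalSpace X]

def diffInclusion (Y : Set X) {U V : Set X} (h : V ⊆ U) : C(↥(V \ Y), ↥(U \ Y)) :=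
  ⟨Set.inclusion (Set.sdiff_subset_sdiff_left h), continuous_inclusion _⟩

theorem diffInclusion_comp (Y : Set X) {U V W : Set X} (hVU : V ⊆ U) (hWV : W ⊆ V) :
    (diffInclusion Y hVU).comp (diffInclusion Y hWV) = diffInclusion Y (hWV.trans hVU) :=
  rfl

theorem isGoodRel_iff (Y : Set X) (𝒰 : Set (Set X)) :
    IsGoodRel Y 𝒰 ↔ ∀ U ∈ 𝒰, ∀ V ∈ 𝒰, ∀ h : V ⊆ U, (diffInclusion Y h).IsHomotopyEquiv :=
  Iff.rfl

theorem IsFundamentalSystem.exists_subset_of_mem {x : X} {𝒰 𝒱 : Set (Set X)}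
    (h𝒰 : IsFundamentalSystem x 𝒰) (h𝒱 : IsFundamentalSystem x 𝒱) {V : Set X} (hV : V ∈ 𝒱) :
    ∃ W ∈ 𝒰, W ⊆ V :=
  h𝒰.2 V (h𝒱.1 V hV).1 (h𝒱.1 V hV).2

theorem isFundamentalSystem_iUnion {x : X} {I : Type*} [Nonempty I] {𝒰 : I → Set (Set X)}
    (hfund : ∀ a, IsFundamentalSystem x (𝒰 a)) : IsFundamentalSystem x (⋃ a, 𝒰 a) := by
  refine ⟨fun U hU => ?_, fun W hW hxW => ?_⟩
  · obtain ⟨a, hUa⟩ := Set.mem_iUnion.mp hU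
    exact (hfund a).1 U hUa
  · obtain ⟨a⟩ := ‹Nonempty I›
    obtain ⟨U, hUa, hUW⟩ := (hfund a).2 W hW hxW
    exact ⟨U, Set.mem_iUnion.mpr ⟨a, hUa⟩, hUW⟩

theorem isGoodRel_iUnion {x : X} {Y : Set X} {I : Type*} {𝒰 : I → Set (Set X)}
    (hfund : ∀ a, IsFundamentalSystem x (𝒰 a)) (hgood : ∀ a, IsGoodRel Y (𝒰 a)) :
    IsGoodRel Y (⋃ a, 𝒰 a) := by
  intro U hU V hV hVU
  obtain ⟨a, hUa⟩ := Set.mem_iUnion.mp hU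
  obtain ⟨b, hVb⟩ := Set.mem_iUnion.mp hV
  obtain ⟨W, hWa, hWV⟩ := (hfund a).exists_subset_of_mem (hfund b) hVb
  obtain ⟨W', hW'b, hW'W⟩ := (hfund b).exists_subset_of_mem (hfund a) hWa
  obtain ⟨p, -, hp⟩ := (isGoodRel_iff Y _).1 (hgood b) V hVb W' hW'b (hW'W.trans hWV)
  have hWU := (isGoodRel_iff Y _).1 (hgood a) U hUa W hWa (hWV.trans hVU)
  rw [← diffInclusion_comp Y hWV hW'W] at hp
  rw [← diffInclusion_comp Y hVU hWV] at hWU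
  exact ContinuousMap.IsHomotopyEquiv.of_comp_of_rightInverse hp hWU

end GoodFundamentalSystems

/-- a nonempty union of fundamental systems of open neighborhoods of
`x`, each good relative to `Y`, is again a fundamental system of open neighborhoods of
`x` good relative to `Y`. -/
theorem union_of_good_fundamental_systems
    {X : Type*} [TopologicalSpace X] (Y : Set X) (x : X)
    {I : Type*} [Nonempty I] (𝒰 : I → Set (Set X))
    (hfund : ∀ a : I, IsFundamentalSystem x (𝒰 a))
    (hgood : ∀ a : I, IsGoodRel Y (𝒰 a)) :
    IsFundamentalSystem x (⋃ a, 𝒰 a) ∧ IsGoodRel Y (⋃ a, 𝒰 a) :=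
  ⟨isFundamentalSystem_iUnion hfund, isGoodRel_iUnion hfund hgood⟩
end
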